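/- arXiv:1405.7167 — 5 statements merged into one kernel-verified Lean document; each statement's English description precedes it below -/
import Mathlib

section
/- For every real c with 0 ≤ c < 7/4, the equation h(c, x) = 0 has no real solution; equivalently, f_c(x) = 1 - c x^2 has no periodic point of least period 3 for 0 ≤ c < 7/4. -/
noncomputable def f (c x : ℝ) : ℝ := 1 - c * x ^ 2

noncomputable def h (c x : ℝ) : ℝ :=
  c ^ 6 * x ^ 6 - c ^ 5 * x ^ 5 + (-3 * c ^ 5 + c ^ 4) * x ^ 4 +
    (2 * c ^ 4 - c ^ 3) * x ^ 3 + (3 * c ^ 4 - c ^ 3 + c ^ 2) * x ^ 2 +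
    (-c ^ 3 + 2 * c ^ 2 - c) * x - c ^ 3 + 2 * c ^ 2 - c + 1

theorem no_period_three_below (c : ℝ) (h0 : 0 ≤ c) (h1 : c < 7/4) :
    ∀ x : ℝ, h c x ≠ 0 ∧ ¬((f c)^[3] x = x ∧ f c x ≠ x) := by
  intro x
  set U : ℝ := c * (c * x ^ 2 - x - 1) with hUdef
  set S : ℝ := 1 + (c * x + 1/2) * U with hSdef
  have hhpos : 0 < S ^ 2 + (7/4 - c) * U ^ 2 := by
    rcases eq_or_ne U 0 with hU | hU
    · have hS : S = 1 := by rw [hSdef, hU]; ring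
      rw [hS, hU]; norm_num
    · have hU2 : 0 < U ^ 2 := lt_of_le_of_ne (sq_nonneg U) (Ne.symm (pow_ne_zero 2 hU))
      have ht : 0 < 7/4 - c := by linarith
      have := mul_pos ht hU2
      nlinarith [sq_nonneg S]
  constructor
  · have key : h c x = S ^ 2 + (7/4 - c) * U ^ 2 + 2 * c ^ 3 * x ^ 2 := by
      rw [h, hSdef, hUdef]; ring
    have hc3 : 0 ≤ 2 * c ^ 3 * x ^ 2 := by positivity
    intro hz
    rw [key] at hz
    linarith
  · rintro ⟨h3, hne⟩
    have h3' : f c (f c (f c x)) = x := by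
      simpa [Function.iterate_succ, Function.comp_apply] using h3
    have factored : f c (f c (f c x)) - x = (f c x - x) * (S ^ 2 + (7/4 - c) * U ^ 2) := by
      simp only [f, hSdef, hUdef]; ring
    rw [h3', sub_self] at factored
    have hfx : f c x - x ≠ 0 := sub_ne_zero_of_ne hne
    have := (mul_eq_zero.mp factored.symm).resolve_left hfx
    linarith
end

section
/- For all real c ≥ 7/4, f_c(x) = 1 - c x^2 has a periodic point of least period 3. -/
noncomputable def periodThreeFactor (c x : ℝ) : ℝ :=
  c^6*x^6 - c^5*x^5 + (c^4 - 3*c^5)*x^4 + (2*c^4 - c^3)*x^3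
    + (3*c^4 - 3*c^3 + c^2)*x^2 + (-c^3 + 2*c^2 - c)*x + (1 - c + 2*c^2 - c^3)

noncomputable def sosCubic (c u : ℝ) : ℝ := u^3 - u^2/2 + (3/8 - 3*c/2)*u + (c/4 - 5/16)

noncomputable def sosQuadratic (c u : ℝ) : ℝ :=
  (12*c - 5)*u^2 - (4*c - 7)*u - 16*c^2 + 3*c - 33/4

lemma iterate_three_sub_self (c x : ℝ) :
    (f c)^[3] x - x = (f c x - x) * periodThreeFactor c x := by
  simp only [Function.iterate_succ, Function.comp_apply, Function.iterate_zero, id, f,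
    periodThreeFactor]
  ring

lemma periodThreeFactor_pos_of_fixed {c x : ℝ} (h : f c x = x) : 0 < periodThreeFactor c x := by
  have hx : 1 - c * x^2 - x = 0 := by rw [f] at h; linarith
  have hP : periodThreeFactor c x = (2*c*x - 1/2)^2 + 3/4 + (1 - c*x^2 - x) *
      (-c^5*x^4 + 2*c^4*x^3 + (2*c^4 - 3*c^3)*x^2 + (-2*c^3 + 4*c^2)*x + (-c^3 + 2*c^2 - c)) := by
    rw [periodThreeFactor]; ring
  rw [hP, hx, zero_mul, add_zero]
  positivity

lemma periodThreeFactor_eq_sos (c x : ℝ) :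
    periodThreeFactor c x = sosCubic c (c*x) ^ 2 + (4*c - 7)/64 * sosQuadratic c (c*x) := by
  simp only [periodThreeFactor, sosCubic, sosQuadratic]
  ring

lemma exists_sosCubic_eq_zero {c : ℝ} (hc : 5/4 ≤ c) :
    ∃ u ∈ Set.Icc (0 : ℝ) (1/4), sosCubic c u = 0 := by
  have hcont : ContinuousOn (sosCubic c) (Set.Icc 0 (1/4)) := by
    unfold sosCubic; fun_prop
  have h0 : 0 ≤ sosCubic c 0 := by rw [sosCubic]; linarith
  have h14 : sosCubic c (1/4) ≤ 0 := by rw [sosCubic]; linarith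
  exact intermediate_value_Icc' (by norm_num) hcont ⟨h14, h0⟩

lemma sosQuadratic_nonpos {c u : ℝ} (hc : 5/12 ≤ c) (hu : u ∈ Set.Icc (0 : ℝ) (1/4)) :
    sosQuadratic c u ≤ 0 := by
  obtain ⟨hu0, hu14⟩ := hu
  -- convexity in `u`: the value is below the chord through `u = 0` and `u = 1/4`
  have hchord : sosQuadratic c u ≤ (1 - 4*u) * sosQuadratic c 0 + 4*u * sosQuadratic c (1/4) := by
    simp only [sosQuadratic]
    nlinarith [mul_nonneg (mul_nonneg hu0 (sub_nonneg.2 hu14)) (sub_nonneg.2 hc)]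
  have hB0 : sosQuadratic c 0 ≤ 0 := by rw [sosQuadratic]; nlinarith [sq_nonneg (c - 1/8)]
  have hB14 : sosQuadratic c (1/4) ≤ 0 := by rw [sosQuadratic]; nlinarith [sq_nonneg (c - 1/8)]
  nlinarith

lemma exists_periodThreeFactor_nonpos {c : ℝ} (hc : 7/4 ≤ c) :
    ∃ x ≤ 2, periodThreeFactor c x ≤ 0 := by
  obtain ⟨u, hu, hAu⟩ := exists_sosCubic_eq_zero (by linarith : (5:ℝ)/4 ≤ c)
  have hc0 : 0 < c := by linarith
  refine ⟨u / c, ?_, ?_⟩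
  · rw [div_le_iff₀ hc0]
    linarith [hu.2]
  · rw [periodThreeFactor_eq_sos, mul_div_cancel₀ u hc0.ne', hAu]
    have hB := sosQuadratic_nonpos (by linarith : (5:ℝ)/12 ≤ c) hu
    have h47 : 0 ≤ (4*c - 7)/64 := by linarith
    nlinarith

lemma periodThreeFactor_two_nonneg {c : ℝ} (hc : 7/4 ≤ c) : 0 ≤ periodThreeFactor c 2 := by
  rw [periodThreeFactor_eq_sos]
  have hB : 0 ≤ sosQuadratic c (c*2) := by rw [sosQuadratic]; nlinarith
  have h47 : 0 ≤ (4*c - 7)/64 := by linarith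
  positivity

lemma exists_periodThreeFactor_eq_zero {c : ℝ} (hc : 7/4 ≤ c) :
    ∃ x, periodThreeFactor c x = 0 := by
  obtain ⟨x₀, hx₀, hP⟩ := exists_periodThreeFactor_nonpos hc
  have hcont : ContinuousOn (periodThreeFactor c) (Set.Icc x₀ 2) := by
    unfold periodThreeFactor; fun_prop
  obtain ⟨x, -, hx⟩ :=
    intermediate_value_Icc hx₀ hcont ⟨hP, periodThreeFactor_two_nonneg hc⟩
  exact ⟨x, hx⟩

theorem period_three_exists (c : ℝ) (hc : 7/4 ≤ c) :
    ∃ x : ℝ, (f c)^[3] x = x ∧ f c x ≠ x := by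
  obtain ⟨x, hx⟩ := exists_periodThreeFactor_eq_zero hc
  refine ⟨x, ?_, fun hfix => (periodThreeFactor_pos_of_fixed hfix).ne' hx⟩
  rw [← sub_eq_zero, iterate_three_sub_self, hx, mul_zero]
end

section
/- Let φ : [0,2] × ℝ → ℝ be continuous with φ_c(0) > 0 for all c ∈ [0,2] and φ_2^n(0) < 0 for all n ≥ 2, and define Φ_n(c) = φ_c^n(0). If n ≥ 2 and Φ_{n-1}(ĉ) = 0 for some ĉ ∈ [0,2), then Φ_n(ĉ) > 0, and hence by the intermediate value theorem Φ_n(c) = 0 has a solution in (ĉ, 2). -/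
open Set

theorem ContinuousOn.iterate_apply_of_uncurry {α β : Type*} [TopologicalSpace α]
    [TopologicalSpace β] {φ : α → β → β} {s : Set α}
    (hφ : ContinuousOn (fun p : α × β => φ p.1 p.2) (s ×ˢ univ)) (x₀ : β) (k : ℕ) :
    ContinuousOn (fun c => (φ c)^[k] x₀) s := by
  induction k with
  | zero => exact continuousOn_const
  | succ k ih =>
    simp only [Function.iterate_succ_apply']
    exact hφ.comp (continuousOn_id.prodMk ih) fun c hc => mk_mem_prod hc (mem_univ _)

theorem next_zero_exists
    (φ : ℝ → ℝ → ℝ)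
    (hcont : ContinuousOn (fun p : ℝ × ℝ => φ p.1 p.2) (Set.Icc 0 2 ×ˢ Set.univ))
    (hpos : ∀ c ∈ Set.Icc (0:ℝ) 2, φ c 0 > 0)
    (hneg : ∀ n : ℕ, 2 ≤ n → (φ 2)^[n] 0 < 0)
    (n : ℕ) (hn : 2 ≤ n)
    (c_hat : ℝ) (hc_hat : c_hat ∈ Set.Ico (0:ℝ) 2)
    (hzero : (φ c_hat)^[n-1] 0 = 0) :
    (φ c_hat)^[n] 0 > 0 ∧ ∃ c ∈ Set.Ioo c_hat 2, (φ c)^[n] 0 = 0 := by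
  have hstart : 0 < (φ c_hat)^[n] 0 := by
    rw [← Nat.sub_add_cancel (by omega : 1 ≤ n), Function.iterate_succ_apply', hzero]
    exact hpos c_hat (Ico_subset_Icc_self hc_hat)
  have hΦ : ContinuousOn (fun c => (φ c)^[n] 0) (Icc c_hat 2) :=
    (hcont.iterate_apply_of_uncurry 0 n).mono (Icc_subset_Icc_left hc_hat.1)
  obtain ⟨c, hc, hc_zero⟩ := intermediate_value_Ioo' hc_hat.2.le hΦ ⟨hneg n hn, hstart⟩
  exact ⟨hstart, c, hc, hc_zero⟩
end

section
/- Let φ : [0,2] × ℝ → ℝ be continuous with φ_c(0) > 0 for all c ∈ [0,2], φ_2^n(0) < 0 for all n ≥ 2, and suppose r ≥ 2 is the smallest integer with Φ_r(ĉ) = 0 for some ĉ ∈ [0,2), where Φ_n(c) = φ_c^n(0). For each n ≥ r let c_n* be the largest solution of Φ_n(c) = 0 in [0,2). Then c_r* < c_{r+1}* < c_{r+2}* < ⋯ < 2, and for each n ≥ r the point 0 is a periodic point of φ_{c_n*} of least period exactly n. -/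
/-!
Since `Φ_{n+1}(c) = φ_c(Φ_n(c))`, at `c = c*_n` we get `Φ_{n+1}(c*_n) = φ_{c*_n}(0) > 0`, while
`Φ_{n+1}(2) < 0`; the intermediate value theorem gives a zero of `Φ_{n+1}` in `(c*_n, 2)`, so
`c*_n < c*_{n+1}`. If `Φ_m(c*_n) = 0` with `m < n`, then `m ≥ 2` because `φ_c(0) > 0`, `m ≥ r` by
minimality of `r`, and then `c*_n ≤ c*_m < c*_n`.
-/

open Set Function

lemma ne_one_of_iterate_eq_zero {f : ℝ → ℝ} {k : ℕ} (hpos : 0 < f 0) (hk : f^[k] 0 = 0) :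
    k ≠ 1 := by
  rintro rfl
  exact hpos.ne' hk

section Family

variable {φ : ℝ → ℝ → ℝ}

lemma continuousOn_iterate_apply {s : Set ℝ}
    (hcont : ContinuousOn (fun p : ℝ × ℝ => φ p.1 p.2) (s ×ˢ univ)) (k : ℕ) (x : ℝ) :
    ContinuousOn (fun c => (φ c)^[k] x) s := by
  induction k with
  | zero => exact continuousOn_const
  | succ k ih =>
    simp only [iterate_succ_apply']
    exact hcont.comp (continuousOn_id.prodMk ih) fun c hc => ⟨hc, trivial⟩

lemma lt_of_forall_iterate_succ_eq_zero_le {a b d : ℝ} {n : ℕ} (hab : a ≤ b)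
    (hcont : ContinuousOn (fun c => (φ c)^[n + 1] 0) (Icc a b))
    (ha : (φ a)^[n] 0 = 0) (hpos : 0 < φ a 0) (hb : (φ b)^[n + 1] 0 < 0)
    (hle : ∀ c ∈ Ioo a b, (φ c)^[n + 1] 0 = 0 → c ≤ d) : a < d := by
  have ha' : 0 < (φ a)^[n + 1] 0 := by rwa [iterate_succ_apply', ha]
  obtain ⟨c, hc, hc0⟩ := intermediate_value_Ioo' hab hcont ⟨hb, ha'⟩
  exact hc.1.trans_le (hle c hc hc0)

end Family

theorem largest_solutions_increasing_general
    (φ : ℝ → ℝ → ℝ)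
    (hcont : ContinuousOn (fun p : ℝ × ℝ => φ p.1 p.2) (Set.Icc 0 2 ×ˢ Set.univ))
    (hpos : ∀ c ∈ Set.Icc (0:ℝ) 2, φ c 0 > 0)
    (hneg : ∀ n : ℕ, 2 ≤ n → (φ 2)^[n] 0 < 0)
    (r : ℕ)
    (hmin : ∀ m : ℕ, 2 ≤ m → m < r → ∀ c ∈ Set.Ico (0:ℝ) 2, (φ c)^[m] 0 ≠ 0)
    (cstar : ℕ → ℝ)
    (hcstar : ∀ n : ℕ, r ≤ n →
      cstar n ∈ Set.Ico (0:ℝ) 2 ∧ (φ (cstar n))^[n] 0 = 0 ∧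
        ∀ c ∈ Set.Ico (0:ℝ) 2, (φ c)^[n] 0 = 0 → c ≤ cstar n) :
    ∀ n : ℕ, r ≤ n →
      cstar n < cstar (n + 1) ∧
      (φ (cstar n))^[n] 0 = 0 ∧
      ∀ m : ℕ, 1 ≤ m → m < n → (φ (cstar n))^[m] 0 ≠ 0 := by
  have hsucc : ∀ k, r ≤ k → cstar k < cstar (k + 1) := by
    intro k hk
    obtain ⟨hmem, hzero, -⟩ := hcstar k hk
    obtain ⟨hmem', hzero', hmax⟩ := hcstar (k + 1) (by omega)
    have hk2 : 2 ≤ k + 1 := by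
      have := ne_one_of_iterate_eq_zero (hpos _ (Ico_subset_Icc_self hmem')) hzero'
      omega
    exact lt_of_forall_iterate_succ_eq_zero_le hmem.2.le
      ((continuousOn_iterate_apply hcont _ _).mono (Icc_subset_Icc hmem.1 le_rfl)) hzero
      (hpos _ (Ico_subset_Icc_self hmem)) (hneg _ hk2)
      fun c hc => hmax c ⟨hmem.1.trans hc.1.le, hc.2⟩
  intro n hn
  obtain ⟨hmem, hzero, -⟩ := hcstar n hn
  refine ⟨hsucc n hn, hzero, fun m hm1 hmn hm0 => ?_⟩
  have hm2 : 2 ≤ m := by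
    have := ne_one_of_iterate_eq_zero (hpos _ (Ico_subset_Icc_self hmem)) hm0
    omega
  rcases lt_or_ge m r with hmr | hrm
  · exact hmin m hm2 hmr _ hmem hm0
  · exact (Nat.rel_of_forall_rel_succ_of_le_of_lt (· < ·) hsucc hrm hmn).not_ge
      ((hcstar m hrm).2.2 _ hmem hm0)

theorem largest_solutions_increasing
    (φ : ℝ → ℝ → ℝ)
    (hcont : ContinuousOn (fun p : ℝ × ℝ => φ p.1 p.2) (Set.Icc 0 2 ×ˢ Set.univ))
    (hpos : ∀ c ∈ Set.Icc (0:ℝ) 2, φ c 0 > 0)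
    (hneg : ∀ n : ℕ, 2 ≤ n → (φ 2)^[n] 0 < 0)
    (r : ℕ) (hr : 2 ≤ r)
    (hex : ∃ c_hat ∈ Set.Ico (0:ℝ) 2, (φ c_hat)^[r] 0 = 0)
    (hmin : ∀ m : ℕ, 2 ≤ m → m < r → ∀ c ∈ Set.Ico (0:ℝ) 2, (φ c)^[m] 0 ≠ 0)
    (cstar : ℕ → ℝ)
    (hcstar : ∀ n : ℕ, r ≤ n →
      cstar n ∈ Set.Ico (0:ℝ) 2 ∧ (φ (cstar n))^[n] 0 = 0 ∧
        ∀ c ∈ Set.Ico (0:ℝ) 2, (φ c)^[n] 0 = 0 → c ≤ cstar n) :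
    ∀ n : ℕ, r ≤ n →
      cstar n < cstar (n + 1) ∧
      (φ (cstar n))^[n] 0 = 0 ∧
      ∀ m : ℕ, 1 ≤ m → m < n → (φ (cstar n))^[m] 0 ≠ 0 :=
  largest_solutions_increasing_general φ hcont hpos hneg r hmin cstar hcstar
end

section
/- Define N_n = Σ_{k=3}^{n-1} a_{k,n} for n ≥ 5 (with N_3 = N_4 = 1), where for each k ≥ 3: a_{k,k} = a_{k,k+1} = 1, a_{k,k+i} = 2^{i-2} for 2 ≤ i ≤ k-1, a_{k,2k} = 2^{k-2} - 1, and a_{k,m} = Σ_{i=1}^{k-1} a_{k,m-i} for m > 2k. Then liminf_{n→∞} (log N_n)/n ≥ log 2. -/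
/-!
For fixed `k` the sequence `a k` satisfies a `(k - 1)`-step Fibonacci recursion, so comparison
with geometric sequences sandwiches it: `a k n ≤ 2 ^ n`, and `a k n ≫ β ^ n` for every `β ≥ 1`
with `β ^ (k - 1) ≤ ∑_{j < k - 1} β ^ j`. Every `β < 2` satisfies this once `k` is large, and
`N n ≥ a k n`, so `liminf log (N n) / n ≥ log β` for all `β < 2`.
-/

open Filter Finset Real Topology

theorem le_of_le_of_recurrence {u v : ℕ → ℝ} {s L M : ℕ} (hLM : L + s ≤ M + 1)
    (hu : ∀ m, M < m → u m ≤ ∑ i ∈ Icc 1 s, u (m - i))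
    (hv : ∀ m, M < m → ∑ i ∈ Icc 1 s, v (m - i) ≤ v m)
    (hbase : ∀ m, L ≤ m → m ≤ M → u m ≤ v m) {m : ℕ} (hm : L ≤ m) : u m ≤ v m := by
  induction m using Nat.strong_induction_on with
  | _ m ih =>
  rcases le_or_gt m M with hmM | hMm
  · exact hbase m hm hmM
  calc u m ≤ ∑ i ∈ Icc 1 s, u (m - i) := hu m hMm
    _ ≤ ∑ i ∈ Icc 1 s, v (m - i) := sum_le_sum fun i hi => by
        have := mem_Icc.mp hi
        exact ih (m - i) (by omega) (by omega)
    _ ≤ v m := hv m hMm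

theorem sum_Icc_pow_sub_eq (β : ℝ) {n m : ℕ} (h : n ≤ m) :
    ∑ i ∈ Icc 1 n, β ^ (m - i) = β ^ (m - n) * ∑ j ∈ range n, β ^ j := by
  rw [mul_sum]
  refine sum_nbij' (n - ·) (n - ·) ?_ ?_ ?_ ?_ ?_
  all_goals
    intro i hi
    simp only [mem_Icc, mem_range] at hi
  · exact mem_range.2 (by omega)
  · exact mem_Icc.2 (by omega)
  · omega
  · omega
  · rw [← pow_add]; congr 1; omega

theorem eventually_pow_le_geom_sum {β : ℝ} (h1 : 1 < β) (h2 : β < 2) :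
    ∀ᶠ s in atTop, β ^ s ≤ ∑ j ∈ range s, β ^ j := by
  filter_upwards [(tendsto_pow_atTop_atTop_of_one_lt h1).eventually_ge_atTop (2 - β)⁻¹]
    with s hs
  -- `β ^ s ≤ (β ^ s - 1) / (β - 1)` is equivalent to `1 ≤ β ^ s * (2 - β)`.
  have : 1 ≤ β ^ s * (2 - β) := (inv_le_iff_one_le_mul₀ (by linarith)).1 hs
  rw [geom_sum_eq h1.ne', le_div_iff₀ (by linarith)]
  linarith

theorem le_liminf_log_div_of_le {u : ℕ → ℝ} {c β C : ℝ} (hc : 0 < c) (hβ : 0 < β)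
    (hlow : ∀ᶠ n in atTop, c * β ^ n ≤ u n) (hup : ∀ᶠ n in atTop, u n ≤ C ^ n) :
    log β ≤ liminf (fun n : ℕ => log (u n) / n) atTop := by
  have hlog_low : ∀ᶠ n : ℕ in atTop, log c / n + log β ≤ log (u n) / n := by
    filter_upwards [hlow, eventually_gt_atTop 0] with n hn hn0
    have hn0' : (0 : ℝ) < n := by exact_mod_cast hn0
    rw [div_add' _ _ _ hn0'.ne', div_le_div_iff_of_pos_right hn0', mul_comm, ← log_pow,
      ← log_mul hc.ne' (by positivity)]
    exact log_le_log (by positivity) hn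
  have hlog_up : ∀ᶠ n : ℕ in atTop, log (u n) / n ≤ log C := by
    filter_upwards [hlow, hup, eventually_gt_atTop 0] with n hlow hup hn0
    rw [div_le_iff₀ (by exact_mod_cast hn0), mul_comm, ← log_pow]
    exact log_le_log ((by positivity : 0 < c * β ^ n).trans_le hlow) hup
  have hlim : Tendsto (fun n : ℕ => log c / n + log β) atTop (𝓝 (log β)) := by
    simpa using (tendsto_const_div_atTop_nhds_zero_nat (log c)).add_const (log β)
  calc log β = liminf (fun n : ℕ => log c / n + log β) atTop := hlim.liminf_eq.symm
    _ ≤ _ := liminf_le_liminf hlog_low hlim.isBoundedUnder_ge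
        (isCoboundedUnder_ge_of_eventually_le atTop hlog_up)

structure IsBonacciLike (k : ℕ) (u : ℕ → ℝ) : Prop where
  eq_self : u k = 1
  eq_succ : u (k + 1) = 1
  eq_add : ∀ i, 2 ≤ i → i ≤ k - 1 → u (k + i) = 2 ^ (i - 2)
  eq_two_mul : u (2 * k) = 2 ^ (k - 2) - 1
  eq_sum : ∀ m, 2 * k < m → u m = ∑ i ∈ Icc 1 (k - 1), u (m - i)

namespace IsBonacciLike

variable {k : ℕ} {u : ℕ → ℝ}

theorem mem_Icc_of_le_two_mul (h : IsBonacciLike k u) (hk : 3 ≤ k) {m : ℕ} (hkm : k ≤ m)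
    (hm : m ≤ 2 * k) : u m ∈ Set.Icc 1 (2 ^ (k - 2)) := by
  have h2 : (2 : ℝ) ≤ 2 ^ (k - 2) := le_self_pow₀ one_le_two (by omega)
  obtain ⟨i, rfl⟩ := Nat.exists_eq_add_of_le hkm
  rcases (by omega : i = 0 ∨ i = 1 ∨ (2 ≤ i ∧ i ≤ k - 1) ∨ i = k) with
    rfl | rfl | ⟨hi2, hik⟩ | rfl
  · rw [add_zero, h.eq_self]; constructor <;> linarith
  · rw [h.eq_succ]; constructor <;> linarith
  · rw [h.eq_add i hi2 hik]
    exact ⟨one_le_pow₀ one_le_two, pow_le_pow_right₀ one_le_two (by omega)⟩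
  · rw [← two_mul, h.eq_two_mul]; constructor <;> linarith

theorem le_two_pow (h : IsBonacciLike k u) (hk : 3 ≤ k) {m : ℕ} (hm : k ≤ m) :
    u m ≤ 2 ^ m := by
  refine le_of_le_of_recurrence (v := fun m => 2 ^ m) (s := k - 1) (M := 2 * k) (by omega)
    (fun m hm => (h.eq_sum m hm).le) (fun m hm => ?_)
    (fun m hkm hm => (h.mem_Icc_of_le_two_mul hk hkm hm).2.trans
      (pow_le_pow_right₀ one_le_two (by omega))) hm
  rw [sum_Icc_pow_sub_eq 2 (by omega), geom_sum_eq (by norm_num)]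
  calc (2 : ℝ) ^ (m - (k - 1)) * ((2 ^ (k - 1) - 1) / (2 - 1))
      ≤ 2 ^ (m - (k - 1)) * 2 ^ (k - 1) := by gcongr; linarith
    _ = 2 ^ m := by rw [← pow_add, Nat.sub_add_cancel (by omega)]

theorem inv_pow_mul_pow_le (h : IsBonacciLike k u) (hk : 3 ≤ k) {β : ℝ} (hβ : 1 ≤ β)
    (hgeom : β ^ (k - 1) ≤ ∑ j ∈ range (k - 1), β ^ j) {m : ℕ} (hm : k ≤ m) :
    (β ^ (2 * k))⁻¹ * β ^ m ≤ u m := by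
  refine le_of_le_of_recurrence (u := fun m => (β ^ (2 * k))⁻¹ * β ^ m) (s := k - 1)
    (M := 2 * k) (by omega) (fun m hm => ?_)
    (fun m hm => (h.eq_sum m hm).ge)
    (fun m hkm hm => (inv_mul_le_one_of_le₀ (pow_le_pow_right₀ hβ hm) (by positivity)).trans
      (h.mem_Icc_of_le_two_mul hk hkm hm).1) hm
  rw [← mul_sum, sum_Icc_pow_sub_eq β (by omega)]
  gcongr
  calc β ^ m = β ^ (m - (k - 1)) * β ^ (k - 1) := by
        rw [← pow_add, Nat.sub_add_cancel (by omega)]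
    _ ≤ β ^ (m - (k - 1)) * ∑ j ∈ range (k - 1), β ^ j := by gcongr

theorem one_le (h : IsBonacciLike k u) (hk : 3 ≤ k) {m : ℕ} (hm : k ≤ m) : 1 ≤ u m := by
  simpa using h.inv_pow_mul_pow_le hk le_rfl (by simp; omega) hm

end IsBonacciLike

section Family

variable {a : ℕ → ℕ → ℝ}

theorem le_sum_of_isBonacciLike (ha : ∀ k, 3 ≤ k → IsBonacciLike k (a k)) {k n : ℕ}
    (hk : 3 ≤ k) (hkn : k < n) : a k n ≤ ∑ j ∈ Icc 3 (n - 1), a j n :=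
  single_le_sum (f := fun j => a j n)
    (fun j hj => zero_le_one.trans <| (ha j (mem_Icc.1 hj).1).one_le (mem_Icc.1 hj).1 <| by
      have := mem_Icc.1 hj; omega)
    (mem_Icc.2 ⟨hk, by omega⟩)

theorem sum_le_four_pow (ha : ∀ k, 3 ≤ k → IsBonacciLike k (a k)) (n : ℕ) :
    ∑ j ∈ Icc 3 (n - 1), a j n ≤ 4 ^ n :=
  calc ∑ j ∈ Icc 3 (n - 1), a j n ≤ ∑ j ∈ Icc 3 (n - 1), (2 : ℝ) ^ n :=
        sum_le_sum fun j hj => (ha j (mem_Icc.1 hj).1).le_two_pow (mem_Icc.1 hj).1 <| by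
          have := mem_Icc.1 hj; omega
    _ = (#(Icc 3 (n - 1)) : ℝ) * 2 ^ n := by rw [sum_const, nsmul_eq_mul]
    _ ≤ 2 ^ n * 2 ^ n := by
        gcongr
        rw [Nat.card_Icc]
        exact_mod_cast (by omega : n - 1 + 1 - 3 ≤ n).trans Nat.lt_two_pow_self.le
    _ = 4 ^ n := by rw [← mul_pow]; norm_num

end Family

theorem liminf_log_N_general
    (a : ℕ → ℕ → ℝ)
    (ha : ∀ k : ℕ, 3 ≤ k →
      a k k = 1 ∧ a k (k + 1) = 1 ∧
      (∀ i : ℕ, 2 ≤ i → i ≤ k - 1 → a k (k + i) = 2 ^ (i - 2)) ∧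
      a k (2 * k) = 2 ^ (k - 2) - 1 ∧
      (∀ m : ℕ, 2 * k < m → a k m = ∑ i ∈ Finset.Icc 1 (k - 1), a k (m - i)))
    (N : ℕ → ℝ)
    (hN : ∀ n : ℕ, 5 ≤ n → N n = ∑ k ∈ Finset.Icc 3 (n - 1), a k n) :
    Real.log 2 ≤ Filter.liminf (fun n : ℕ => Real.log (N n) / n) Filter.atTop := by
  have hA : ∀ k, 3 ≤ k → IsBonacciLike k (a k) := fun k hk =>
    let ⟨h₁, h₂, h₃, h₄, h₅⟩ := ha k hk
    ⟨h₁, h₂, h₃, h₄, h₅⟩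
  have hup : ∀ᶠ n in atTop, N n ≤ 4 ^ n := by
    filter_upwards [eventually_ge_atTop 5] with n hn
    exact (hN n hn).trans_le (sum_le_four_pow hA n)
  have hβ : ∀ β ∈ Set.Ioo (1 : ℝ) 2, log β ≤ liminf (fun n : ℕ => log (N n) / n) atTop := by
    rintro β ⟨hβ1, hβ2⟩
    obtain ⟨s, hgeom, hs⟩ :=
      ((eventually_pow_le_geom_sum hβ1 hβ2).and (eventually_ge_atTop 2)).exists
    refine le_liminf_log_div_of_le (c := (β ^ (2 * (s + 1)))⁻¹) (by positivity) (by positivity)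
      ?_ hup
    filter_upwards [eventually_ge_atTop (s + 5)] with n hn
    rw [hN n (by omega)]
    exact ((hA (s + 1) (by omega)).inv_pow_mul_pow_le (by omega) hβ1.le (by simpa using hgeom)
      (by omega)).trans (le_sum_of_isBonacciLike hA (by omega) (by omega))
  have hlog : Tendsto log (𝓝[<] 2) (𝓝 (log 2)) :=
    (continuousAt_log two_ne_zero).tendsto.mono_left nhdsWithin_le_nhds
  exact le_of_tendsto hlog (mem_of_superset (Ioo_mem_nhdsLT one_lt_two) hβ)

theorem liminf_log_N
    (a : ℕ → ℕ → ℝ)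
    (ha : ∀ k : ℕ, 3 ≤ k →
      a k k = 1 ∧ a k (k + 1) = 1 ∧
      (∀ i : ℕ, 2 ≤ i → i ≤ k - 1 → a k (k + i) = 2 ^ (i - 2)) ∧
      a k (2 * k) = 2 ^ (k - 2) - 1 ∧
      (∀ m : ℕ, 2 * k < m → a k m = ∑ i ∈ Finset.Icc 1 (k - 1), a k (m - i)))
    (N : ℕ → ℝ)
    (hN3 : N 3 = 1) (hN4 : N 4 = 1)
    (hN : ∀ n : ℕ, 5 ≤ n → N n = ∑ k ∈ Finset.Icc 3 (n - 1), a k n) :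
    Real.log 2 ≤ Filter.liminf (fun n : ℕ => Real.log (N n) / n) Filter.atTop :=
  liminf_log_N_general a ha N hN
end
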